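/- There exists a tetrahedron T in ℝ³ and an interior point c of T such that exactly one vertex of T is an equilibrium point with respect to c. -/

import Mathlib

open scoped RealInnerProductSpace

noncomputable section

abbrev E3 := EuclideanSpace ℝ (Fin 3)

/-- Vertex `q` of the convex body `T` is an equilibrium point with respect to `c`:
the plane through `q` perpendicular to `q - c` supports `T` at `q`. -/
def IsVertexEquil (T : Set E3) (c q : E3) : Prop :=
  ∀ x ∈ T, ⟪x - q, q - c⟫ ≤ 0

/-! Take `c = 0`. Then a vertex `q` is an equilibrium iff no vertex lies beyond the plane through
`q` orthogonal to `q`, i.e. no vertex `x` has `⟪x, q⟫ > ‖q‖²`. In `tetra`, vertex `i - 1` lies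
beyond that plane at vertex `i` for `i = 1, 2, 3`, while the far-out vertex `tetra 0` dominates
every other vertex in its own direction. The vertices balance at `0` with the positive weights
`29, 1000, 50000, 500000`, so `0` is interior. -/

theorem isVertexEquil_convexHull_iff {s : Set E3} {c q : E3} :
    IsVertexEquil (convexHull ℝ s) c q ↔ ∀ x ∈ s, ⟪x - q, q - c⟫ ≤ 0 := by
  refine ⟨fun h x hx => h x (subset_convexHull ℝ s hx), fun h x hx => ?_⟩
  have hhalf : Convex ℝ {x : E3 | ⟪x, q - c⟫ ≤ ⟪q, q - c⟫} :=
    convex_halfSpace_le ⟨fun _ _ => inner_add_left _ _ _, fun _ _ => real_inner_smul_left _ _ _⟩ _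
  have hsub : s ⊆ {x : E3 | ⟪x, q - c⟫ ≤ ⟪q, q - c⟫} := fun x hx => by
    simpa [inner_sub_left] using h x hx
  simpa [inner_sub_left] using convexHull_min hsub hhalf hx

theorem AffineBasis.sum_smul_mem_interior_convexHull {ι V : Type*} [Fintype ι]
    [NormedAddCommGroup V] [NormedSpace ℝ V] (b : AffineBasis ι ℝ V) {w : ι → ℝ}
    (hw : ∑ i, w i = 1) (hpos : ∀ i, 0 < w i) :
    ∑ i, w i • b i ∈ interior (convexHull ℝ (Set.range b)) := by
  rw [← Finset.univ.affineCombination_eq_linear_combination _ _ hw, b.interior_convexHull]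
  intro i
  rw [b.coord_apply_combination_of_mem (Finset.mem_univ i) hw]
  exact hpos i

namespace OneUnstable

def tetra : Fin 4 → E3 :=
  ![!₂[1000000, 0, 0], !₂[1000, 10000, 0], !₂[-500, 100, 10], !₂[-10, -30, -1]]

theorem tetra_affineIndependent : AffineIndependent ℝ tetra := by
  rw [affineIndependent_iff_of_fintype]
  intro w hw hvs
  rw [Finset.univ.weightedVSub_eq_linear_combination hw] at hvs
  have h0 := congrArg (fun v : E3 => v 0) hvs
  have h1 := congrArg (fun v : E3 => v 1) hvs
  have h2 := congrArg (fun v : E3 => v 2) hvs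
  simp only [tetra, Fin.sum_univ_four, Matrix.cons_val_zero, Matrix.cons_val_one, Matrix.cons_val,
    PiLp.add_apply, PiLp.smul_apply, smul_eq_mul, PiLp.zero_apply] at h0 h1 h2
  rw [Fin.sum_univ_four] at hw
  intro i
  fin_cases i <;> simp only [Fin.zero_eta, Fin.mk_one, Fin.reduceFinMk] <;> linarith

theorem zero_mem_interior_convexHull_tetra :
    (0 : E3) ∈ interior (convexHull ℝ (Set.range tetra)) := by
  let b : AffineBasis (Fin 4) ℝ E3 := ⟨tetra, tetra_affineIndependent,
    tetra_affineIndependent.affineSpan_eq_top_iff_card_eq_finrank_add_one.2 (by simp)⟩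
  have hb : ⇑b = tetra := rfl
  let w : Fin 4 → ℝ := ![29, 1000, 50000, 500000] / 551029
  have hw : ∑ i, w i = 1 := by simp [w, Fin.sum_univ_four]; norm_num
  have hpos : ∀ i, 0 < w i := by intro i; fin_cases i <;> simp [w]
  have hbalance : ∑ i, w i • tetra i = 0 := by
    ext j
    fin_cases j <;> simp [w, tetra, Fin.sum_univ_four] <;> norm_num
  have hmem := b.sum_smul_mem_interior_convexHull hw hpos
  rwa [hb, hbalance] at hmem

theorem inner_tetra_sub_tetra_zero_nonpos (k : Fin 4) : ⟪tetra k - tetra 0, tetra 0⟫ ≤ 0 := by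
  fin_cases k <;> simp [tetra, PiLp.inner_apply, Fin.sum_univ_three] <;> norm_num

theorem exists_inner_tetra_sub_pos {i : Fin 4} (hi : i ≠ 0) :
    ∃ k, 0 < ⟪tetra k - tetra i, tetra i⟫ := by
  refine ⟨i - 1, ?_⟩
  fin_cases i <;> simp_all [tetra, PiLp.inner_apply, Fin.sum_univ_three] <;> norm_num

end OneUnstable

open OneUnstable in
/-- There is an (inhomogeneous) tetrahedron with an interior reference point with
respect to which exactly one vertex is an equilibrium point. -/
theorem exists_tetrahedron_one_unstable :
    ∃ (p : Fin 4 → E3) (c : E3), AffineIndependent ℝ p ∧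
      c ∈ interior (convexHull ℝ (Set.range p)) ∧
      ∃! i : Fin 4, IsVertexEquil (convexHull ℝ (Set.range p)) c (p i) := by
  refine ⟨tetra, 0, tetra_affineIndependent, zero_mem_interior_convexHull_tetra, 0, ?_, ?_⟩
  · simpa [isVertexEquil_convexHull_iff] using inner_tetra_sub_tetra_zero_nonpos
  · intro i hequil
    by_contra hi
    obtain ⟨k, hk⟩ := exists_inner_tetra_sub_pos hi
    rw [isVertexEquil_convexHull_iff] at hequil
    simpa using (hequil (tetra k) ⟨k, rfl⟩).trans_lt hk
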